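/- Let V and Q be real inner product spaces and B : V → Q → ℝ a bilinear map. Suppose (λ₁, u₁, p₁) and (λ₂, u₂, p₂) are least-squares eigensolutions with λ₁ ≠ λ₂. Then ⟪p₁, p₂⟫_Q = 0 and ⟪u₁, u₂⟫_V = 0. (This is Proposition 3.6: eigenfunctions corresponding to distinct eigenvalues are orthogonal in both the Q and the V inner products.) -/
import Mathlib


open scoped RealInnerProductSpace

/-- `(λ, u, p)` is a least-squares eigensolution:
`⟪u, v⟫_V − B v p = λ ⬝ B v p` for all `v`, and `⟪p, q⟫_Q = B u q` for all `q`. -/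
def IsLSEigensolution {V Q : Type*} [NormedAddCommGroup V] [InnerProductSpace ℝ V]
    [NormedAddCommGroup Q] [InnerProductSpace ℝ Q]
    (B : V →ₗ[ℝ] Q →ₗ[ℝ] ℝ) (lam : ℝ) (u : V) (p : Q) : Prop :=
  (∀ v : V, ⟪u, v⟫ - B v p = lam * B v p) ∧ (∀ q : Q, ⟪p, q⟫ = B u q)

/-- Proposition 3.6: eigenfunctions corresponding to distinct eigenvalues are
orthogonal in both the `Q` and the `V` inner products. -/
theorem ls_eigenfunctions_orthogonal
    {V Q : Type*} [NormedAddCommGroup V] [InnerProductSpace ℝ V]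
    [NormedAddCommGroup Q] [InnerProductSpace ℝ Q]
    (B : V →ₗ[ℝ] Q →ₗ[ℝ] ℝ) (lam₁ lam₂ : ℝ) (u₁ u₂ : V) (p₁ p₂ : Q)
    (h1 : IsLSEigensolution B lam₁ u₁ p₁) (h2 : IsLSEigensolution B lam₂ u₂ p₂)
    (hne : lam₁ ≠ lam₂) :
    ⟪p₁, p₂⟫ = 0 ∧ ⟪u₁, u₂⟫ = 0 := by
  have e1 : ⟪u₁, u₂⟫ = (1 + lam₁) * ⟪p₂, p₁⟫ := by
    have := h1.1 u₂
    have hb := h2.2 p₁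
    rw [← hb] at this
    linarith
  have e2 : ⟪u₂, u₁⟫ = (1 + lam₂) * ⟪p₁, p₂⟫ := by
    have := h2.1 u₁
    have hb := h1.2 p₂
    rw [← hb] at this
    linarith
  have hs : ⟪p₂, p₁⟫ = ⟪p₁, p₂⟫ := real_inner_comm _ _
  have hu : ⟪u₁, u₂⟫ = ⟪u₂, u₁⟫ := real_inner_comm _ _
  have hp : ⟪p₁, p₂⟫ = 0 := by
    have : (lam₁ - lam₂) * ⟪p₁, p₂⟫ = 0 := by
      rw [hs] at e1; nlinarith [e1, e2, hu]
    rcases mul_eq_zero.mp this with h | h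
    · exact absurd (sub_eq_zero.mp h) hne
    · exact h
  refine ⟨hp, ?_⟩
  rw [e1, hs, hp, mul_zero]
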